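/- Let B and C be commuting Hermitian n×n complex matrices and let μ be a finite Borel measure on ℂⁿ with μ({0}) = 0. Define g : ℝ → ℝ by g(t) = ∫ (‖exp(C + t·B)·z‖²/‖z‖²) dμ(z), where exp denotes the matrix exponential and ‖·‖ the Euclidean norm on ℂⁿ. If g has derivative 0 at t = 0 and derivative 0 at t = 1, then B·z = 0 for μ-almost every z, and consequently g is constant on ℝ. -/

import Mathlib

/-!
For fixed `z`, `f t = ‖exp (C + t • B) z‖²` is convex: as `B` is self-adjoint and commutes with
`C`, `f'' t = 4 ‖exp (C + t • B) (B z)‖²`, which is positive for every `t` unless `B z = 0`.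
Differentiating under the integral, `0 = g' 1 - g' 0 = ∫ (f' 1 - f' 0) / ‖z‖² dμ` has a
nonnegative integrand, so `f' 1 = f' 0` for almost every `z ≠ 0`, which forces `B z = 0`. For such
`z`, `t ↦ exp (C + t • B) z` has derivative `exp (C + t • B) (B z) = 0`, so the integrand of `g`
does not depend on `t`.
-/

open Matrix MeasureTheory NormedSpace Filter Topology
open scoped InnerProductSpace

-- The lemmas about `NormedSpace.exp` need a `ℚ`-normed-algebra structure, which Mathlib does not
-- put on operator algebras.
noncomputable instance {𝕜 E : Type*} [NontriviallyNormedField 𝕜] [NormedAlgebra ℚ 𝕜]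
    [NormedAddCommGroup E] [NormedSpace 𝕜 E] : NormedAlgebra ℚ (E →L[𝕜] E) :=
  .restrictScalars ℚ 𝕜 _

open scoped Matrix.Norms.L2Operator in
theorem Matrix.toEuclideanCLM_exp {𝕜 ι : Type*} [RCLike 𝕜] [Fintype ι] [DecidableEq ι]
    (A : Matrix ι ι 𝕜) :
    toEuclideanCLM (n := ι) (𝕜 := 𝕜) (exp A) = exp (toEuclideanCLM (n := ι) (𝕜 := 𝕜) A) :=
  letI : NormedAlgebra ℚ (Matrix ι ι 𝕜) := .restrictScalars ℚ 𝕜 _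
  map_exp toEuclideanCLM (LinearMap.continuous_of_finiteDimensional
    (toEuclideanCLM (n := ι) (𝕜 := 𝕜)).toAlgEquiv.toLinearMap) A

theorem Matrix.toEuclideanLin_exp_add_smul_apply {ι : Type*} [Fintype ι] [DecidableEq ι]
    (B C : Matrix ι ι ℂ) (t : ℝ) (z : EuclideanSpace ℂ ι) :
    toEuclideanLin (exp (C + t • B)) z =
      exp (toEuclideanCLM (n := ι) (𝕜 := ℂ) C + t • toEuclideanCLM (n := ι) (𝕜 := ℂ) B) z := by
  have hmap : toEuclideanCLM (n := ι) (𝕜 := ℂ) (C + t • B) =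
      toEuclideanCLM (n := ι) (𝕜 := ℂ) C + t • toEuclideanCLM (n := ι) (𝕜 := ℂ) B := by
    rw [map_add, ← Complex.coe_smul t B, map_smul]
    exact congrArg _ (Complex.coe_smul t (toEuclideanCLM (n := ι) (𝕜 := ℂ) B))
  rw [← hmap, ← toEuclideanCLM_exp]
  rfl

theorem hasDerivAt_integral_of_bounded {α F : Type*} [MeasurableSpace α] {μ : Measure α}
    [IsFiniteMeasure μ] [NormedAddCommGroup F] [NormedSpace ℝ F] {f f' : ℝ → α → F} {t₀ K : ℝ}
    (hf_meas : ∀ᶠ t in 𝓝 t₀, AEStronglyMeasurable (f t) μ) (hf_int : Integrable (f t₀) μ)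
    (hf'_meas : AEStronglyMeasurable (f' t₀) μ) (hf'_le : ∀ᶠ t in 𝓝 t₀, ∀ a, ‖f' t a‖ ≤ K)
    (hf : ∀ a t, HasDerivAt (f · a) (f' t a) t) :
    Integrable (f' t₀) μ ∧ HasDerivAt (fun t => ∫ a, f t a ∂μ) (∫ a, f' t₀ a ∂μ) t₀ :=
  hasDerivAt_integral_of_dominated_loc_of_deriv_le hf'_le hf_meas hf_int hf'_meas
    (ae_of_all _ fun a _ ht => ht a) (integrable_const K) (ae_of_all _ fun a t _ => hf a t)

theorem norm_div_norm_sq_le {E : Type*} [SeminormedAddCommGroup E] {y K : ℝ} {z : E}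
    (hK : 0 ≤ K) (h : |y| ≤ K * ‖z‖ ^ 2) : ‖y / ‖z‖ ^ 2‖ ≤ K := by
  rw [Real.norm_eq_abs, abs_div, abs_of_nonneg (sq_nonneg ‖z‖)]
  exact div_le_of_le_mul₀ (by positivity) hK h

section BanachAlgebra

variable {𝔸 : Type*} [NormedRing 𝔸] [NormedAlgebra ℝ 𝔸] [NormedAlgebra ℚ 𝔸] [CompleteSpace 𝔸]
  {b c : 𝔸}

theorem hasDerivAt_exp_add_smul (hbc : Commute b c) (t : ℝ) :
    HasDerivAt (fun s : ℝ => exp (c + s • b)) (exp (c + t • b) * b) t := by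
  have hsplit (s : ℝ) : exp (c + s • b) = exp c * exp (s • b) :=
    exp_add_of_commute (hbc.symm.smul_right s)
  simp only [hsplit, mul_assoc]
  exact (hasDerivAt_exp_smul_const b t).const_mul (exp c)

end BanachAlgebra

section BanachSpace

variable {E : Type*} [NormedAddCommGroup E] [NormedSpace ℂ E] [CompleteSpace E]
  {b c : E →L[ℂ] E}

theorem exp_apply_eq_zero_iff {a : E →L[ℂ] E} {w : E} : exp a w = 0 ↔ w = 0 := by
  let := invertibleExp a
  refine ⟨fun hw => ?_, fun hw => by rw [hw, map_zero]⟩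
  have h := DFunLike.congr_fun (invOf_mul_self (exp a)) w
  rwa [mul_apply_eq_comp, hw, map_zero, one_apply_eq_self, eq_comm] at h

theorem hasDerivAt_exp_add_smul_apply (hbc : Commute b c) (w : E) (t : ℝ) :
    HasDerivAt (fun s : ℝ => exp (c + s • b) w) (exp (c + t • b) (b w)) t := by
  simpa [Function.comp_def] using
    ((ContinuousLinearMap.apply ℂ E w).restrictScalars ℝ).hasFDerivAt.comp_hasDerivAt t
      (hasDerivAt_exp_add_smul hbc t)

theorem exp_add_smul_apply_of_apply_eq_zero (hbc : Commute b c) {z : E} (hz : b z = 0)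
    (t : ℝ) : exp (c + t • b) z = exp c z := by
  have hderiv (s : ℝ) := hasDerivAt_exp_add_smul_apply hbc z s
  simpa using is_const_of_deriv_eq_zero (fun s => (hderiv s).differentiableAt)
    (fun s => by simp [(hderiv s).deriv, hz]) t 0

end BanachSpace

section HilbertSpace

variable {E : Type*} [NormedAddCommGroup E] [InnerProductSpace ℂ E]

attribute [local instance] InnerProductSpace.complexToReal

theorem abs_inner_apply_apply_le (u a : E →L[ℂ] E) (z : E) :
    |⟪u z, u (a z)⟫_ℝ| ≤ ‖u‖ ^ 2 * ‖a‖ * ‖z‖ ^ 2 :=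
  calc |⟪u z, u (a z)⟫_ℝ| ≤ ‖u z‖ * ‖u (a z)‖ := abs_real_inner_le_norm _ _
    _ ≤ (‖u‖ * ‖z‖) * (‖u‖ * (‖a‖ * ‖z‖)) := by
      gcongr
      · exact u.le_opNorm z
      · exact (u.le_opNorm _).trans (by gcongr; exact a.le_opNorm z)
    _ = ‖u‖ ^ 2 * ‖a‖ * ‖z‖ ^ 2 := by ring

variable [CompleteSpace E] {b c : E →L[ℂ] E}

theorem hasDerivAt_norm_sq_exp_add_smul_apply (hbc : Commute b c) (z : E) (t : ℝ) :
    HasDerivAt (fun s : ℝ => ‖exp (c + s • b) z‖ ^ 2)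
      (2 * ⟪exp (c + t • b) z, exp (c + t • b) (b z)⟫_ℝ) t :=
  (hasDerivAt_exp_add_smul_apply hbc z t).norm_sq

theorem hasDerivAt_inner_exp_add_smul_apply (hb : IsSelfAdjoint b) (hbc : Commute b c)
    (z : E) (t : ℝ) :
    HasDerivAt (fun s : ℝ => ⟪exp (c + s • b) z, exp (c + s • b) (b z)⟫_ℝ)
      (2 * ‖exp (c + t • b) (b z)‖ ^ 2) t := by
  set u := exp (c + t • b)
  refine ((hasDerivAt_exp_add_smul_apply hbc z t).inner ℝ
    (hasDerivAt_exp_add_smul_apply hbc (b z) t)).congr_deriv ?_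
  have hcomm (w : E) : u (b w) = b (u w) :=
    DFunLike.congr_fun (hbc.add_right ((Commute.refl b).smul_right t)).exp_right.eq.symm w
  have hsymm : ⟪u z, u (b (b z))⟫_ℝ = ⟪u (b z), u (b z)⟫_ℝ := by
    simp only [real_inner_eq_re_inner, hcomm]
    exact congrArg _ (hb.isSymmetric _ _).symm
  rw [hsymm, real_inner_self_eq_norm_sq]
  ring

theorem monotone_inner_exp_add_smul_apply (hb : IsSelfAdjoint b) (hbc : Commute b c) (z : E) :
    Monotone fun t : ℝ => ⟪exp (c + t • b) z, exp (c + t • b) (b z)⟫_ℝ :=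
  monotone_of_hasDerivAt_nonneg (hasDerivAt_inner_exp_add_smul_apply hb hbc z)
    fun _ => by positivity

theorem strictMono_inner_exp_add_smul_apply (hb : IsSelfAdjoint b) (hbc : Commute b c) {z : E}
    (hz : b z ≠ 0) : StrictMono fun t : ℝ => ⟪exp (c + t • b) z, exp (c + t • b) (b z)⟫_ℝ :=
  strictMono_of_hasDerivAt_pos (hasDerivAt_inner_exp_add_smul_apply hb hbc z)
    fun t => by
      have := norm_pos_iff.2 ((exp_apply_eq_zero_iff (a := c + t • b)).not.2 hz)
      positivity

variable [MeasurableSpace E] [BorelSpace E] (μ : Measure E) [IsFiniteMeasure μ]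

theorem hasDerivAt_integral_norm_sq_exp_add_smul_div (hbc : Commute b c) (t₀ : ℝ) :
    Integrable (fun z => 2 * ⟪exp (c + t₀ • b) z, exp (c + t₀ • b) (b z)⟫_ℝ / ‖z‖ ^ 2) μ ∧
      HasDerivAt (fun t : ℝ => ∫ z, ‖exp (c + t • b) z‖ ^ 2 / ‖z‖ ^ 2 ∂μ)
        (∫ z, 2 * ⟪exp (c + t₀ • b) z, exp (c + t₀ • b) (b z)⟫_ℝ / ‖z‖ ^ 2 ∂μ) t₀ := by
  set M := ‖exp (c + t₀ • b)‖ + 1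
  have hcont : Continuous fun t : ℝ => exp (c + t • b) := by fun_prop
  have hM : ∀ᶠ t in 𝓝 t₀, ‖exp (c + t • b)‖ ≤ M :=
    (hcont.norm.continuousAt.eventually_lt continuousAt_const (lt_add_one _)).mono
      fun _ => le_of_lt
  have hmeas (t : ℝ) :
      AEStronglyMeasurable (fun z => ‖exp (c + t • b) z‖ ^ 2 / ‖z‖ ^ 2) μ :=
    Measurable.aestronglyMeasurable (by fun_prop)
  refine hasDerivAt_integral_of_bounded (K := 2 * M ^ 2 * ‖b‖) (.of_forall hmeas) ?_
    (Measurable.aestronglyMeasurable (by fun_prop)) (hM.mono fun t ht z => ?_)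
    fun z t => (hasDerivAt_norm_sq_exp_add_smul_apply hbc z t).div_const _
  · refine (integrable_const (‖exp (c + t₀ • b)‖ ^ 2)).mono' (hmeas t₀) (ae_of_all _ fun z => ?_)
    refine norm_div_norm_sq_le (by positivity) ?_
    rw [abs_of_nonneg (by positivity), ← mul_pow]
    gcongr
    exact (exp (c + t₀ • b)).le_opNorm z
  · refine norm_div_norm_sq_le (by positivity) ?_
    calc |2 * ⟪exp (c + t • b) z, exp (c + t • b) (b z)⟫_ℝ|
        = 2 * |⟪exp (c + t • b) z, exp (c + t • b) (b z)⟫_ℝ| := by rw [abs_mul, abs_two]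
      _ ≤ 2 * (M ^ 2 * ‖b‖ * ‖z‖ ^ 2) := by
        gcongr
        exact (abs_inner_apply_apply_le _ b z).trans (by gcongr)
      _ = 2 * M ^ 2 * ‖b‖ * ‖z‖ ^ 2 := by ring

theorem ae_apply_eq_zero_of_two_critical_points
    (hb : IsSelfAdjoint b) (hbc : Commute b c)
    (h0 : HasDerivAt (fun t : ℝ => ∫ z, ‖exp (c + t • b) z‖ ^ 2 / ‖z‖ ^ 2 ∂μ) 0 0)
    (h1 : HasDerivAt (fun t : ℝ => ∫ z, ‖exp (c + t • b) z‖ ^ 2 / ‖z‖ ^ 2 ∂μ) 0 1) :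
    ∀ᵐ z ∂μ, b z = 0 := by
  set φ : ℝ → E → ℝ := fun t z => 2 * ⟪exp (c + t • b) z, exp (c + t • b) (b z)⟫_ℝ / ‖z‖ ^ 2
  obtain ⟨hφ₀_int, hderiv₀⟩ := hasDerivAt_integral_norm_sq_exp_add_smul_div μ hbc 0
  obtain ⟨hφ₁_int, hderiv₁⟩ := hasDerivAt_integral_norm_sq_exp_add_smul_div μ hbc 1
  have hφ_le (z : E) : φ 0 z ≤ φ 1 z := by
    simp only [φ]
    gcongr
    exact monotone_inner_exp_add_smul_apply hb hbc z zero_le_one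
  have hφ_sub_int : ∫ z, (φ 1 z - φ 0 z) ∂μ = 0 := by
    rw [integral_sub hφ₁_int hφ₀_int, ← h0.unique hderiv₀, ← h1.unique hderiv₁, sub_zero]
  filter_upwards [(integral_eq_zero_iff_of_nonneg (fun z => sub_nonneg.2 (hφ_le z))
    (hφ₁_int.sub hφ₀_int)).1 hφ_sub_int] with z hz
  by_contra hbz
  have hz0 : 0 < ‖z‖ := norm_pos_iff.2 fun h => hbz (by rw [h, map_zero])
  have hφ_lt : φ 0 z < φ 1 z := by
    simp only [φ]
    gcongr
    exact strictMono_inner_exp_add_smul_apply hb hbc hbz zero_lt_one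
  exact hφ_lt.ne (sub_eq_zero.1 hz).symm

end HilbertSpace

theorem ae_eq_zero_and_const_of_two_critical_points_general
    (n : ℕ) (B C : Matrix (Fin n) (Fin n) ℂ) (hB : Bᴴ = B)
    (hBC : B * C = C * B)
    [MeasurableSpace (EuclideanSpace ℂ (Fin n))] [BorelSpace (EuclideanSpace ℂ (Fin n))]
    (μ : Measure (EuclideanSpace ℂ (Fin n))) [IsFiniteMeasure μ]
    (g : ℝ → ℝ)
    (hg : ∀ t : ℝ, g t = ∫ z : EuclideanSpace ℂ (Fin n),
      ‖Matrix.toEuclideanLin (NormedSpace.exp (C + t • B)) z‖ ^ 2 / ‖z‖ ^ 2 ∂μ)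
    (h0 : HasDerivAt g 0 0) (h1 : HasDerivAt g 0 1) :
    (∀ᵐ z ∂μ, Matrix.toEuclideanLin B z = 0) ∧ ∀ t : ℝ, g t = g 0 := by
  set b := toEuclideanCLM (n := Fin n) (𝕜 := ℂ) B
  set c := toEuclideanCLM (n := Fin n) (𝕜 := ℂ) C
  have hb : IsSelfAdjoint b := IsSelfAdjoint.map hB _
  have hbc : Commute b c := Commute.map hBC _
  have hg_eq : g = fun t : ℝ => ∫ z, ‖exp (c + t • b) z‖ ^ 2 / ‖z‖ ^ 2 ∂μ :=
    funext fun t => by simp only [hg, toEuclideanLin_exp_add_smul_apply, b, c]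
  subst hg_eq
  have hbz := ae_apply_eq_zero_of_two_critical_points μ hb hbc h0 h1
  refine ⟨hbz, fun t => integral_congr_ae ?_⟩
  filter_upwards [hbz] with z hz
  simp only [exp_add_smul_apply_of_apply_eq_zero hbc hz]

/-- let `B`, `C` be commuting Hermitian matrices and `μ` a finite Borel
measure on `ℂⁿ` with `μ {0} = 0`. If `g(t) = ∫ ‖exp (C + t • B) z‖² / ‖z‖² dμ(z)` has
derivative `0` both at `t = 0` and at `t = 1`, then `B z = 0` for `μ`-almost every `z`,
and consequently `g` is constant on `ℝ`. -/
theorem ae_eq_zero_and_const_of_two_critical_points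
    (n : ℕ) (B C : Matrix (Fin n) (Fin n) ℂ) (hB : Bᴴ = B) (hC : Cᴴ = C)
    (hBC : B * C = C * B)
    [MeasurableSpace (EuclideanSpace ℂ (Fin n))] [BorelSpace (EuclideanSpace ℂ (Fin n))]
    (μ : Measure (EuclideanSpace ℂ (Fin n))) [IsFiniteMeasure μ]
    (hμ0 : μ {0} = 0)
    (g : ℝ → ℝ)
    (hg : ∀ t : ℝ, g t = ∫ z : EuclideanSpace ℂ (Fin n),
      ‖Matrix.toEuclideanLin (NormedSpace.exp (C + t • B)) z‖ ^ 2 / ‖z‖ ^ 2 ∂μ)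
    (h0 : HasDerivAt g 0 0) (h1 : HasDerivAt g 0 1) :
    (∀ᵐ z ∂μ, Matrix.toEuclideanLin B z = 0) ∧ ∀ t : ℝ, g t = g 0 :=
  ae_eq_zero_and_const_of_two_critical_points_general n B C hB hBC μ g hg h0 h1
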